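/- Let (R_μ)_{μ ∈ I} be any finite family of Hermitian n×n complex matrices with the associated quantities α₁, α₂, β₁, β₂, β₃, β₄, β₅. Then max_{i,j ∈ {1,2}} |α_i · α_j| ≥ max_{u ∈ {1,…,5}} |β_u|. -/

import Mathlib

open Matrix Finset

/-- Real part of the trace of a complex matrix (the traces in question are real
for Hermitian matrices). -/
noncomputable def rtr {α : Type} [Fintype α] (M : Matrix α α ℂ) : ℝ :=
  (Matrix.trace M).re

/-- α₁ = ∑_μ (Tr R_μ)². -/
noncomputable def alpha1 {α I : Type} [Fintype α] [Fintype I]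
    (R : I → Matrix α α ℂ) : ℝ := ∑ μ, (rtr (R μ)) ^ 2

/-- α₂ = ∑_μ Tr(R_μ²). -/
noncomputable def alpha2 {α I : Type} [Fintype α] [Fintype I]
    (R : I → Matrix α α ℂ) : ℝ := ∑ μ, rtr (R μ * R μ)

/-- β₁ = ∑_{μ,ν} (Tr(R_μ R_ν))². -/
noncomputable def beta1 {α I : Type} [Fintype α] [Fintype I]
    (R : I → Matrix α α ℂ) : ℝ := ∑ μ, ∑ ν, (rtr (R μ * R ν)) ^ 2

/-- β₂ = ∑_{μ,ν} Tr(R_μ R_ν)·Tr(R_μ)·Tr(R_ν). -/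
noncomputable def beta2 {α I : Type} [Fintype α] [Fintype I]
    (R : I → Matrix α α ℂ) : ℝ := ∑ μ, ∑ ν, rtr (R μ * R ν) * rtr (R μ) * rtr (R ν)

/-- β₃ = ∑_{μ,ν} Tr(R_μ R_ν²)·Tr(R_μ). -/
noncomputable def beta3 {α I : Type} [Fintype α] [Fintype I]
    (R : I → Matrix α α ℂ) : ℝ := ∑ μ, ∑ ν, rtr (R μ * (R ν * R ν)) * rtr (R μ)

/-- β₄ = ∑_{μ,ν} Tr(R_μ² R_ν²). -/
noncomputable def beta4 {α I : Type} [Fintype α] [Fintype I]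
    (R : I → Matrix α α ℂ) : ℝ := ∑ μ, ∑ ν, rtr (R μ * R μ * (R ν * R ν))

/-- β₅ = ∑_{μ,ν} Tr(R_μ R_ν R_μ R_ν). -/
noncomputable def beta5 {α I : Type} [Fintype α] [Fintype I]
    (R : I → Matrix α α ℂ) : ℝ := ∑ μ, ∑ ν, rtr (R μ * R ν * R μ * R ν)

/-- max_{i,j ∈ {1,2}} |α_i α_j|. -/
noncomputable def maxAlpha {α I : Type} [Fintype α] [Fintype I]
    (R : I → Matrix α α ℂ) : ℝ :=
  max (max |alpha1 R * alpha1 R| |alpha1 R * alpha2 R|)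
      (max |alpha2 R * alpha1 R| |alpha2 R * alpha2 R|)

/-- max_{u ∈ {1,…,5}} |β_u|. -/
noncomputable def maxBeta {α I : Type} [Fintype α] [Fintype I]
    (R : I → Matrix α α ℂ) : ℝ :=
  max |beta1 R| (max |beta2 R| (max |beta3 R| (max |beta4 R| |beta5 R|)))

/-!
Equip matrices with the Frobenius norm. Cauchy–Schwarz gives `|Tr (A B)| ≤ ‖A‖ ‖B‖` and the norm is
submultiplicative, so each summand of a `β` is bounded by a product `g μ * h ν` with
`g, h ∈ {‖R μ‖², ‖R μ‖ |Tr R μ|}`. For Hermitian `R μ` we have `∑ ‖R μ‖² = α₂`, and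
`P := ∑ ‖R μ‖ |Tr R μ| ≤ √(α₁ α₂)` by Cauchy–Schwarz in `ℝ^I`. Hence `β₁, β₄, β₅ ≤ α₂²`,
`β₂ ≤ P² ≤ α₁ α₂` and `β₃ ≤ P α₂ ≤ max (α₁ α₂) (α₂²)`.
-/

open WithLp (toLp)

section Frobenius

attribute [local instance] Matrix.frobeniusSeminormedAddCommGroup

variable {m n : Type} [Fintype m] [Fintype n]

/-- `‖A‖` is by definition the norm of `toLp 2 fun i => toLp 2 (A i)` in `ℓ²(m, ℓ²(n))`. -/
lemma inner_toLp_toLp_eq_trace_mul_conjTranspose (A B : Matrix m n ℂ) :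
    inner ℂ (toLp 2 fun i => toLp 2 (A i)) (toLp 2 fun i => toLp 2 (B i)) = trace (B * Aᴴ) := by
  simp [PiLp.inner_apply, trace, mul_apply]

theorem abs_rtr_mul_conjTranspose_le (A B : Matrix m n ℂ) : |rtr (B * Aᴴ)| ≤ ‖A‖ * ‖B‖ := by
  rw [rtr, ← inner_toLp_toLp_eq_trace_mul_conjTranspose]
  exact (Complex.abs_re_le_norm _).trans (norm_inner_le_norm _ _)

theorem rtr_mul_conjTranspose_self (A : Matrix m n ℂ) : rtr (A * Aᴴ) = ‖A‖ ^ 2 := by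
  rw [rtr, ← inner_toLp_toLp_eq_trace_mul_conjTranspose, ← RCLike.re_to_complex,
    inner_self_eq_norm_sq]
  rfl

theorem abs_rtr_mul_le (A B : Matrix n n ℂ) : |rtr (A * B)| ≤ ‖A‖ * ‖B‖ := by
  simpa [frobenius_norm_conjTranspose, mul_comm] using abs_rtr_mul_conjTranspose_le Bᴴ A

theorem abs_rtr_mul_mul_mul_le (A B C D : Matrix n n ℂ) :
    |rtr (A * B * (C * D))| ≤ ‖A‖ * ‖B‖ * (‖C‖ * ‖D‖) :=
  (abs_rtr_mul_le _ _).trans <|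
    mul_le_mul (frobenius_norm_mul _ _) (frobenius_norm_mul _ _) (norm_nonneg _) (by positivity)

theorem Matrix.IsHermitian.rtr_mul_self {A : Matrix n n ℂ} (hA : A.IsHermitian) :
    rtr (A * A) = ‖A‖ ^ 2 := by
  simpa [hA.eq] using rtr_mul_conjTranspose_self A

end Frobenius

theorem abs_sum_sum_le_sum_mul_sum {ι κ : Type*} (s : Finset ι) (t : Finset κ)
    {f : ι → κ → ℝ} {g : ι → ℝ} {h : κ → ℝ} (hfgh : ∀ i ∈ s, ∀ j ∈ t, |f i j| ≤ g i * h j) :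
    |∑ i ∈ s, ∑ j ∈ t, f i j| ≤ (∑ i ∈ s, g i) * (∑ j ∈ t, h j) :=
  calc |∑ i ∈ s, ∑ j ∈ t, f i j| ≤ ∑ i ∈ s, ∑ j ∈ t, |f i j| :=
        (abs_sum_le_sum_abs _ _).trans (sum_le_sum fun _ _ => abs_sum_le_sum_abs _ _)
    _ ≤ ∑ i ∈ s, ∑ j ∈ t, g i * h j :=
        sum_le_sum fun i hi => sum_le_sum fun j hj => hfgh i hi j hj
    _ = (∑ i ∈ s, g i) * (∑ j ∈ t, h j) := (sum_mul_sum _ _ _ _).symm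

theorem mul_le_max_of_sq_le_mul {a b p : ℝ} (ha : 0 ≤ a) (hb : 0 ≤ b) (hp : p ^ 2 ≤ a * b) :
    p * b ≤ max (a * b) (b * b) := by
  have hmax : 0 ≤ max a b := le_max_of_le_left ha
  have hab : a * b ≤ max a b ^ 2 :=
    sq (max a b) ▸ mul_le_mul (le_max_left _ _) (le_max_right _ _) hb hmax
  calc p * b ≤ max a b * b := by gcongr; exact (abs_le_of_sq_le_sq' (hp.trans hab) hmax).2
    _ = max (a * b) (b * b) := max_mul_of_nonneg _ _ hb

section Beta

attribute [local instance] Matrix.frobeniusSeminormedAddCommGroup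

variable {α I : Type} [Fintype α] [Fintype I] (R : I → Matrix α α ℂ)

theorem sq_sum_norm_mul_abs_rtr_le :
    (∑ μ, ‖R μ‖ * |rtr (R μ)|) ^ 2 ≤ alpha1 R * ∑ μ, ‖R μ‖ ^ 2 := by
  simpa [alpha1, mul_comm] using
    sum_mul_sq_le_sq_mul_sq univ (fun μ => ‖R μ‖) (fun μ => |rtr (R μ)|)

theorem abs_beta1_le : |beta1 R| ≤ (∑ μ, ‖R μ‖ ^ 2) * ∑ μ, ‖R μ‖ ^ 2 :=
  abs_sum_sum_le_sum_mul_sum _ _ fun μ _ ν _ => by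
    rw [abs_pow, ← mul_pow]
    exact pow_le_pow_left₀ (abs_nonneg _) (abs_rtr_mul_le _ _) 2

theorem abs_beta2_le :
    |beta2 R| ≤ (∑ μ, ‖R μ‖ * |rtr (R μ)|) * ∑ μ, ‖R μ‖ * |rtr (R μ)| :=
  abs_sum_sum_le_sum_mul_sum _ _ fun μ _ ν _ => by
    calc |rtr (R μ * R ν) * rtr (R μ) * rtr (R ν)|
        ≤ ‖R μ‖ * ‖R ν‖ * |rtr (R μ)| * |rtr (R ν)| := by
          simp only [abs_mul]; gcongr; exact abs_rtr_mul_le _ _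
      _ = ‖R μ‖ * |rtr (R μ)| * (‖R ν‖ * |rtr (R ν)|) := by ring

theorem abs_beta3_le : |beta3 R| ≤ (∑ μ, ‖R μ‖ * |rtr (R μ)|) * ∑ μ, ‖R μ‖ ^ 2 :=
  abs_sum_sum_le_sum_mul_sum _ _ fun μ _ ν _ => by
    calc |rtr (R μ * (R ν * R ν)) * rtr (R μ)|
        ≤ ‖R μ‖ * (‖R ν‖ * ‖R ν‖) * |rtr (R μ)| := by
          rw [abs_mul]; gcongr
          exact (abs_rtr_mul_le _ _).trans (by gcongr; exact frobenius_norm_mul _ _)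
      _ = ‖R μ‖ * |rtr (R μ)| * ‖R ν‖ ^ 2 := by ring

theorem abs_beta4_le : |beta4 R| ≤ (∑ μ, ‖R μ‖ ^ 2) * ∑ μ, ‖R μ‖ ^ 2 :=
  abs_sum_sum_le_sum_mul_sum _ _ fun _ _ _ _ =>
    (abs_rtr_mul_mul_mul_le _ _ _ _).trans_eq (by ring)

theorem abs_beta5_le : |beta5 R| ≤ (∑ μ, ‖R μ‖ ^ 2) * ∑ μ, ‖R μ‖ ^ 2 :=
  abs_sum_sum_le_sum_mul_sum _ _ fun μ _ ν _ => by
    rw [mul_assoc (R μ * R ν)]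
    exact (abs_rtr_mul_mul_mul_le _ _ _ _).trans_eq (by ring)

end Beta

theorem max_beta_le_max_alpha {n : ℕ} {I : Type} [Fintype I]
    (R : I → Matrix (Fin n) (Fin n) ℂ) (hR : ∀ μ, (R μ).IsHermitian) :
    maxBeta R ≤ maxAlpha R := by
  let _ : SeminormedAddCommGroup (Matrix (Fin n) (Fin n) ℂ) := frobeniusSeminormedAddCommGroup
  set P := ∑ μ, ‖R μ‖ * |rtr (R μ)|
  have hα₂ : ∑ μ, ‖R μ‖ ^ 2 = alpha2 R := sum_congr rfl fun μ _ => ((hR μ).rtr_mul_self).symm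
  have hα₁_nonneg : 0 ≤ alpha1 R := by unfold alpha1; positivity
  have hα₂_nonneg : 0 ≤ alpha2 R := hα₂ ▸ by positivity
  have hP : P ^ 2 ≤ alpha1 R * alpha2 R := hα₂ ▸ sq_sum_norm_mul_abs_rtr_le R
  have h₁₂ : alpha1 R * alpha2 R ≤ maxAlpha R :=
    (le_abs_self _).trans <| le_max_of_le_left (le_max_right _ _)
  have h₂₂ : alpha2 R * alpha2 R ≤ maxAlpha R :=
    (le_abs_self _).trans <| le_max_of_le_right (le_max_right _ _)
  have hP₂ : P * alpha2 R ≤ maxAlpha R :=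
    (mul_le_max_of_sq_le_mul hα₁_nonneg hα₂_nonneg hP).trans (max_le h₁₂ h₂₂)
  refine max_le ?_ (max_le ?_ (max_le ?_ (max_le ?_ ?_)))
  · exact hα₂ ▸ abs_beta1_le R |>.trans h₂₂
  · exact (abs_beta2_le R).trans ((sq P ▸ hP).trans h₁₂)
  · exact hα₂ ▸ abs_beta3_le R |>.trans hP₂
  · exact hα₂ ▸ abs_beta4_le R |>.trans h₂₂
  · exact hα₂ ▸ abs_beta5_le R |>.trans h₂₂
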